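/- Let n, m ≥ 1 and let Ψ : ℤ^n \ {0} → [0,∞). Then M_{nm}(A^×_{n,m}(Ψ) \ ∩_{k∈ℕ} A^×_{n,m}(Ψ/k)) = 0, i.e., the set of points of A^×_{n,m}(Ψ) not belonging to A^×_{n,m}(Ψ/k) for every positive integer k has nm-dimensional Lebesgue measure zero. -/

import Mathlib

open MeasureTheory
open scoped ENNReal

/-- The set `A^×_{n,m}(Ψ)`: multiplicative approximation with no coprimality condition. -/
def multSetA (n m : ℕ) (Ψ : (Fin n → ℤ) → ℝ) : Set (Fin m → Fin n → ℝ) :=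
  {X | (∀ j i, X j i ∈ Set.Icc (0 : ℝ) 1) ∧
    {qp : (Fin n → ℤ) × (Fin m → ℤ) | qp.1 ≠ 0 ∧
      (∏ j, |(∑ i, (qp.1 i : ℝ) * X j i) + (qp.2 j : ℝ)|) < Ψ qp.1}.Infinite}

/-!
Off the null set of `X` for which some `q · X_j` (`q ≠ 0`) is an integer, each `q` admits only
finitely many `p`. So a point of `A(Ψ) \ A(Ψ/k)` has solutions for `q` with `|q_{i₀}|` unbounded,
for some coordinate `i₀`, and none with `Ψ/k` once `|q_{i₀}|` is large. By Fubini it suffices to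
show that these points meet every line in the coordinate `X_{j₀ i₀}` in a null set. On such a line
the condition for `q` reads `‖a x + γ‖ < φ` with `a = q_{i₀}`: a solution puts `x` within `φ/|a|`
of a point `z` around which no point of the set lies closer than `φ/(2k|a|)`, since there
`‖a y + γ‖ < φ/k`. These balls avoiding the set are arbitrarily small and at bounded ratio from
`x`, so the Lebesgue density theorem makes the set null.
-/

open Function Metric Filter Topology
open scoped Matrix

theorem measure_eq_zero_of_forall_exists_disjoint_closedBall {α : Type*} [PseudoMetricSpace α]
    [MeasurableSpace α] [SecondCountableTopology α] [BorelSpace α] (μ : Measure α)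
    [IsUnifLocDoublingMeasure μ] [IsLocallyFiniteMeasure μ] {B : Set α} (K : ℝ)
    (h : ∀ x ∈ B, ∀ ε > 0, ∃ z r, 0 < r ∧ r ≤ ε ∧ x ∈ closedBall z (K * r) ∧
      Disjoint B (closedBall z r)) :
    μ B = 0 := by
  rw [← Measure.restrict_apply_self]
  refine measure_mono_null (fun x hx ↦ ?_)
    (ae_iff.mp (IsUnifLocDoublingMeasure.ae_tendsto_measure_inter_div μ B K))
  choose z r hr hrε hxz hdisj using h x hx
  intro hdensity
  have hr_lim : Tendsto (fun j : ℕ ↦ r (1 / (j + 1)) Nat.one_div_pos_of_nat) atTop (𝓝[>] 0) := by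
    refine tendsto_nhdsWithin_iff.mpr ⟨?_, Eventually.of_forall fun j ↦ hr _ _⟩
    exact squeeze_zero (fun j ↦ (hr _ _).le) (fun j ↦ hrε _ _)
      tendsto_one_div_add_atTop_nhds_zero_nat
  have := hdensity _ _ hr_lim (Eventually.of_forall fun j ↦ hxz _ _)
  simp only [(hdisj _ _).inter_eq, measure_empty, ENNReal.zero_div] at this
  exact zero_ne_one (tendsto_nhds_unique tendsto_const_nhds this)

theorem MeasureTheory.Measure.pi_eq_zero_of_forall_update_preimage {ι : Type*} [Fintype ι]
    [DecidableEq ι] {X : ι → Type*} [∀ i, MeasurableSpace (X i)] {μ : ∀ i, Measure (X i)}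
    [∀ i, SigmaFinite (μ i)] {S : Set (∀ i, X i)} (hS : MeasurableSet S) (i : ι)
    (h : ∀ f : ∀ i, X i, μ i (update f i ⁻¹' S) = 0) :
    Measure.pi μ S = 0 := by
  rcases isEmpty_or_nonempty (∀ i, X i) with hX | ⟨⟨f₀⟩⟩
  · exact (Set.eq_empty_of_isEmpty S).symm ▸ measure_empty
  rw [← lintegral_indicator_one hS, lintegral_eq_lmarginal_univ f₀,
    lmarginal_erase' _ (measurable_one.indicator hS) (Finset.mem_univ i)]
  have hsection (f : ∀ i, X i) :
      ∫⁻ x, S.indicator 1 (update f i x) ∂μ i = 0 := by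
    rw [← h f, ← lintegral_indicator_one (measurable_update f hS)]
    rfl
  simp [hsection, lmarginal]

theorem volume_eq_zero_of_forall_update_update {ι κ : Type*} [Fintype ι] [DecidableEq ι]
    [Fintype κ] [DecidableEq κ] {S : Set (ι → κ → ℝ)} (hS : MeasurableSet S) (j : ι) (i : κ)
    (h : ∀ F g, volume {x : ℝ | update F j (update g i x) ∈ S} = 0) :
    volume S = 0 := by
  rw [volume_pi]
  refine Measure.pi_eq_zero_of_forall_update_preimage hS j fun F ↦ ?_
  rw [volume_pi]
  exact Measure.pi_eq_zero_of_forall_update_preimage (measurable_update F hS) i (h F)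

noncomputable def distToInt (y : ℝ) : ℝ := |y - round y|

lemma distToInt_nonneg (y : ℝ) : 0 ≤ distToInt y := abs_nonneg _

lemma distToInt_le_half (y : ℝ) : distToInt y ≤ 1 / 2 := abs_sub_round y

lemma distToInt_le_abs_sub (y : ℝ) (p : ℤ) : distToInt y ≤ |y - p| := round_le y p

lemma distToInt_le_abs_add (y : ℝ) (p : ℤ) : distToInt y ≤ |y + p| := by
  simpa using distToInt_le_abs_sub y (-p)

lemma abs_add_neg_round (y : ℝ) : |y + ((-round y : ℤ) : ℝ)| = distToInt y := by
  simp [distToInt, sub_eq_add_neg]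

lemma distToInt_pos {y : ℝ} (hy : ∀ z : ℤ, y ≠ z) : 0 < distToInt y :=
  abs_pos.mpr (sub_ne_zero.mpr (hy _))

lemma measurable_distToInt : Measurable distToInt := by
  unfold distToInt
  simp_rw [round_eq]
  fun_prop

lemma abs_mul_add_sub_eq {a : ℝ} (ha : a ≠ 0) (x γ R : ℝ) :
    |a * x + γ - R| = |a| * |x - (R - γ) / a| := by
  rw [← abs_mul, mul_sub, mul_div_cancel₀ _ ha]
  ring_nf

theorem volume_setOf_frequently_lt_forall_div_le {α : Type*} (a : α → ℤ) (γ φ : α → ℝ) {k : ℝ}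
    (hk : 0 < k) (N : ℤ) :
    volume {x : ℝ | (∀ M : ℤ, ∃ i, M ≤ |a i| ∧ distToInt (a i * x + γ i) < φ i) ∧
      ∀ i, N ≤ |a i| → φ i / k ≤ distToInt (a i * x + γ i)} = 0 := by
  refine measure_eq_zero_of_forall_exists_disjoint_closedBall volume (2 * k) ?_
  rintro x ⟨hfreq, hexcl⟩ ε hε
  obtain ⟨i, hM, hlt⟩ := hfreq (max N ⌈ε⁻¹⌉)
  have hN : N ≤ |a i| := le_of_max_le_left hM
  set A := |(a i : ℝ)|
  have hεA : ε⁻¹ ≤ A := calc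
    ε⁻¹ ≤ ⌈ε⁻¹⌉ := Int.le_ceil _
    _ ≤ ((|a i| : ℤ) : ℝ) := by exact_mod_cast le_of_max_le_right hM
    _ = A := Int.cast_abs
  have hA : 0 < A := (inv_pos.2 hε).trans_le hεA
  have ha : (a i : ℝ) ≠ 0 := abs_pos.mp hA
  have hφ : 0 < φ i := (distToInt_nonneg _).trans_lt hlt
  have hφk : φ i ≤ k / 2 := by
    have := (hexcl i hN).trans (distToInt_le_half _)
    rw [div_le_iff₀ hk] at this
    linarith
  set R := round ((a i : ℝ) * x + γ i)
  refine ⟨(R - γ i) / a i, φ i / (2 * k * A), by positivity, ?_, ?_, ?_⟩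
  · rw [div_le_iff₀ (by positivity)]
    nlinarith [(inv_le_iff_one_le_mul₀' hε).mp hεA]
  · rw [mem_closedBall, Real.dist_eq, show 2 * k * (φ i / (2 * k * A)) = φ i / A by field_simp,
      le_div_iff₀ hA, mul_comm, ← abs_mul_add_sub_eq ha]
    exact hlt.le
  · refine Set.disjoint_left.mpr fun y hy hyz ↦ ?_
    rw [mem_closedBall, Real.dist_eq] at hyz
    have : distToInt (a i * y + γ i) ≤ φ i / (2 * k) := calc
      distToInt (a i * y + γ i) ≤ |a i * y + γ i - R| := distToInt_le_abs_sub _ _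
      _ = A * |y - (R - γ i) / a i| := abs_mul_add_sub_eq ha _ _ _
      _ ≤ A * (φ i / (2 * k * A)) := by gcongr
      _ = φ i / (2 * k) := by field_simp
    have := (hy.2 i hN).trans this
    rw [div_le_div_iff_of_pos_left hφ hk (by positivity)] at this
    linarith

lemma finite_setOf_abs_add_lt (y R : ℝ) : {z : ℤ | |y + z| < R}.Finite := by
  have : {z : ℤ | |y + z| < R} = ((↑) : ℤ → ℝ) ⁻¹' Set.Ioo (-y - R) (R - y) := by
    ext z
    simp only [Set.mem_ofPred_eq, Set.mem_preimage, Set.mem_Ioo, abs_lt]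
    constructor <;> rintro ⟨h₁, h₂⟩ <;> constructor <;> linarith
  rw [this, Int.preimage_Ioo]
  exact Set.finite_Ioo _ _

lemma finite_setOf_prod_abs_add_lt {ι : Type*} [Fintype ι] {y : ι → ℝ}
    (hy : ∀ j, 0 < distToInt (y j)) (c : ℝ) :
    {p : ι → ℤ | ∏ j, |y j + p j| < c}.Finite := by
  classical
  set D := fun j ↦ ∏ j' ∈ Finset.univ.erase j, distToInt (y j')
  have hD (j) : 0 < D j := Finset.prod_pos fun j' _ ↦ hy j'
  refine (Set.Finite.pi' fun j ↦ finite_setOf_abs_add_lt (y j) (c / D j)).subset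
    fun p (hp : _ < c) j ↦ ?_
  rw [Set.mem_ofPred_eq, lt_div_iff₀ (hD j)]
  refine lt_of_le_of_lt ?_ hp
  rw [← Finset.mul_prod_erase _ _ (Finset.mem_univ j)]
  exact mul_le_mul_of_nonneg_left (Finset.prod_le_prod (fun _ _ ↦ distToInt_nonneg _)
    fun _ _ ↦ distToInt_le_abs_add _ _) (abs_nonneg _)

lemma exists_forall_exists_le_abs_apply {κ : Type*} [Finite κ] {Q : Set (κ → ℤ)}
    (hQ : Q.Infinite) : ∃ i, ∀ M : ℤ, ∃ q ∈ Q, M ≤ |q i| := by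
  by_contra! h
  choose M hM using h
  refine hQ ((Set.Finite.pi' fun i ↦ Set.finite_Icc (-M i) (M i)).subset fun q hq i ↦ ?_)
  exact abs_le.mp (hM i q hq).le

section
variable {ι κ : Type*} [Fintype ι] [Fintype κ]

lemma dotProduct_update [DecidableEq κ] (q : κ → ℤ) (g : κ → ℝ) (i : κ) (x : ℝ) :
    (Int.cast ∘ q) ⬝ᵥ update g i x = q i * x + ((Int.cast ∘ q) ⬝ᵥ g - q i * g i) := by
  have : update g i x = g + Pi.single i (x - g i) := by
    ext j; rcases eq_or_ne j i with rfl | h <;> simp [*]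
  rw [this, dotProduct_add, dotProduct_single]
  simp only [comp_apply]
  ring

def approxSet (q : κ → ℤ) (c : ℝ) : Set (ι → κ → ℝ) :=
  {X | ∏ j, distToInt ((Int.cast ∘ q) ⬝ᵥ X j) < c}

def solutionPairs (X : ι → κ → ℝ) (Ψ : (κ → ℤ) → ℝ) : Set ((κ → ℤ) × (ι → ℤ)) :=
  {qp | qp.1 ≠ 0 ∧ ∏ j, |(Int.cast ∘ qp.1) ⬝ᵥ X j + qp.2 j| < Ψ qp.1}

variable (ι κ) in
def integralHyperplanes : Set (ι → κ → ℝ) :=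
  ⋃ (q : κ → ℤ) (_ : q ≠ 0) (j : ι) (z : ℤ), {X | (Int.cast ∘ q) ⬝ᵥ X j = z}

def badSet (Ψ : (κ → ℤ) → ℝ) (k : ℝ) (N : ℤ) (i₀ : κ) : Set (ι → κ → ℝ) :=
  {X | (∀ M : ℤ, ∃ q, M ≤ |q i₀| ∧ X ∈ approxSet q (Ψ q)) ∧
    ∀ q, N ≤ |q i₀| → X ∉ approxSet q (Ψ q / k)}

lemma mem_approxSet_of_mem_solutionPairs {X : ι → κ → ℝ} {Ψ : (κ → ℤ) → ℝ} {q : κ → ℤ}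
    {p : ι → ℤ} (h : (q, p) ∈ solutionPairs X Ψ) : X ∈ approxSet q (Ψ q) :=
  lt_of_le_of_lt (Finset.prod_le_prod (fun _ _ ↦ distToInt_nonneg _)
    fun _ _ ↦ distToInt_le_abs_add _ _) h.2

lemma mk_mem_solutionPairs_of_mem_approxSet {X : ι → κ → ℝ} {Ψ : (κ → ℤ) → ℝ} {q : κ → ℤ}
    (hq : q ≠ 0) (h : X ∈ approxSet q (Ψ q)) :
    (q, fun j ↦ -round ((Int.cast ∘ q) ⬝ᵥ X j)) ∈ solutionPairs X Ψ :=
  ⟨hq, by simp only [abs_add_neg_round]; exact h⟩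

lemma measurableSet_approxSet (q : κ → ℤ) (c : ℝ) :
    MeasurableSet (approxSet (ι := ι) q c) := by
  refine measurableSet_lt ?_ measurable_const
  exact Finset.measurable_prod _ fun j _ ↦ measurable_distToInt.comp (by fun_prop)

lemma measurableSet_badSet (Ψ : (κ → ℤ) → ℝ) (k : ℝ) (N : ℤ) (i₀ : κ) :
    MeasurableSet (badSet (ι := ι) Ψ k N i₀) := by
  simp only [badSet, measurableSet_setOfPred]
  refine (Measurable.forall fun M ↦ Measurable.exists fun q ↦ ?_).and
    (Measurable.forall fun q ↦ ?_)
  · exact measurable_const.and (measurable_mem.mpr (measurableSet_approxSet q _))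
  · exact measurable_const.imp (measurable_mem.mpr (measurableSet_approxSet q _)).not

omit [Fintype ι] in
lemma distToInt_pos_of_notMem_integralHyperplanes {X : ι → κ → ℝ}
    (hX : X ∉ integralHyperplanes ι κ) {q : κ → ℤ} (hq : q ≠ 0) (j : ι) :
    0 < distToInt ((Int.cast ∘ q) ⬝ᵥ X j) :=
  distToInt_pos fun z hz ↦ hX <| by
    simp only [integralHyperplanes, Set.mem_iUnion]
    exact ⟨q, hq, j, z, hz⟩

lemma exists_forall_exists_mem_approxSet {X : ι → κ → ℝ} {Ψ : (κ → ℤ) → ℝ}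
    (hX : (solutionPairs X Ψ).Infinite) (hXH : X ∉ integralHyperplanes ι κ) :
    ∃ i₀, ∀ M : ℤ, ∃ q, M ≤ |q i₀| ∧ X ∈ approxSet q (Ψ q) := by
  have hfst : (Prod.fst '' solutionPairs X Ψ).Infinite := by
    refine fun hfin ↦ hX (Set.Finite.of_finite_fibers Prod.fst hfin ?_)
    rintro q ⟨qp, hqp, rfl⟩
    refine ((finite_setOf_prod_abs_add_lt
      (distToInt_pos_of_notMem_integralHyperplanes hXH hqp.1) (Ψ qp.1)).image
        (Prod.mk qp.1)).subset ?_
    rintro ⟨q, p⟩ ⟨hqp', rfl : q = qp.1⟩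
    exact ⟨p, hqp'.2, rfl⟩
  obtain ⟨i₀, hi₀⟩ := exists_forall_exists_le_abs_apply hfst
  refine ⟨i₀, fun M ↦ ?_⟩
  obtain ⟨_, ⟨⟨q, p⟩, hqp, rfl⟩, hM⟩ := hi₀ M
  exact ⟨q, hM, mem_approxSet_of_mem_solutionPairs hqp⟩

lemma exists_forall_notMem_approxSet {X : ι → κ → ℝ} {Ψ : (κ → ℤ) → ℝ}
    (h : (solutionPairs X Ψ).Finite) (i₀ : κ) :
    ∃ N : ℤ, ∀ q, N ≤ |q i₀| → X ∉ approxSet q (Ψ q) := by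
  obtain ⟨b, hb⟩ := ((h.image Prod.fst).image fun q ↦ |q i₀|).bddAbove
  refine ⟨max b 0 + 1, fun q hq hX ↦ ?_⟩
  have hq0 : q ≠ 0 := by
    rintro rfl
    simp only [Pi.zero_apply, abs_zero] at hq
    omega
  have : |q i₀| ≤ b := hb ⟨q, ⟨_, mk_mem_solutionPairs_of_mem_approxSet hq0 hX, rfl⟩, rfl⟩
  omega

lemma volume_integralHyperplanes : volume (integralHyperplanes ι κ) = 0 := by
  classical
  refine measure_iUnion_null fun q ↦ measure_iUnion_null fun hq ↦
    measure_iUnion_null fun j ↦ measure_iUnion_null fun z ↦ ?_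
  obtain ⟨i, hi⟩ := Function.ne_iff.mp hq
  refine volume_eq_zero_of_forall_update_update
    (measurableSet_eq_fun (by fun_prop) measurable_const) j i fun F g ↦ ?_
  refine Set.Subsingleton.measure_zero (fun x hx y hy ↦ ?_) _
  simp only [Set.mem_ofPred_eq, update_self, dotProduct_update] at hx hy
  exact mul_left_cancel₀ (Int.cast_ne_zero.mpr hi) (by linarith)

lemma volume_badSet [Nonempty ι] (Ψ : (κ → ℤ) → ℝ) {k : ℝ} (hk : 0 < k) (N : ℤ) (i₀ : κ) :
    volume (badSet (ι := ι) Ψ k N i₀) = 0 := by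
  classical
  let j₀ : ι := Classical.arbitrary ι
  refine volume_eq_zero_of_forall_update_update (measurableSet_badSet Ψ k N i₀) j₀ i₀
    fun F g ↦ ?_
  let γ (q : κ → ℤ) : ℝ := (Int.cast ∘ q) ⬝ᵥ g - q i₀ * g i₀
  let C (q : κ → ℤ) : ℝ := ∏ j ∈ Finset.univ.erase j₀, distToInt ((Int.cast ∘ q) ⬝ᵥ F j)
  have hC (q) : 0 ≤ C q := Finset.prod_nonneg fun _ _ ↦ distToInt_nonneg _
  have hprod (q : κ → ℤ) (x : ℝ) :
      ∏ j, distToInt ((Int.cast ∘ q) ⬝ᵥ update F j₀ (update g i₀ x) j) =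
        distToInt (q i₀ * x + γ q) * C q := by
    rw [← Finset.mul_prod_erase _ _ (Finset.mem_univ j₀), update_self, dotProduct_update]
    congr 1
    refine Finset.prod_congr rfl fun j hj ↦ ?_
    rw [update_of_ne (Finset.ne_of_mem_erase hj)]
  refine measure_mono_null ?_ (volume_setOf_frequently_lt_forall_div_le (fun q ↦ q i₀) γ
    (fun q ↦ Ψ q / C q) hk N)
  rintro x ⟨hfreq, hexcl⟩
  simp only [approxSet, Set.mem_ofPred_eq, hprod, not_lt] at hfreq hexcl
  refine ⟨fun M ↦ ?_, fun q hq ↦ ?_⟩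
  · obtain ⟨q, hq, hlt⟩ := hfreq (max M N)
    have hge := hexcl q (le_of_max_le_right hq)
    -- if `C q = 0`, the `Ψ`-solution would also be a `Ψ/k`-solution
    have hCq : 0 < C q := (hC q).lt_of_ne' fun h0 ↦ by
      rw [h0, mul_zero] at hlt hge
      exact (div_pos hlt hk).not_ge hge
    exact ⟨q, le_of_max_le_left hq, (lt_div_iff₀ hCq).mpr hlt⟩
  · have hge := hexcl q hq
    rcases (hC q).eq_or_lt with h0 | hCq
    · simp [← h0, distToInt_nonneg] -- `Ψ q / 0 = 0`
    · rw [div_div, div_le_iff₀ (by positivity)]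
      rw [div_le_iff₀ hk] at hge
      nlinarith
end

lemma exists_mem_badSet {n m : ℕ} {Ψ : (Fin n → ℤ) → ℝ} {k : ℝ} {X : Fin m → Fin n → ℝ}
    (hX : X ∈ multSetA n m Ψ) (hXk : X ∉ multSetA n m fun q ↦ Ψ q / k)
    (hXH : X ∉ integralHyperplanes (Fin m) (Fin n)) :
    ∃ N i₀, X ∈ badSet Ψ k N i₀ := by
  obtain ⟨i₀, hi₀⟩ := exists_forall_exists_mem_approxSet hX.2 hXH
  have hfin : (solutionPairs X fun q ↦ Ψ q / k).Finite :=
    Set.not_infinite.mp fun h ↦ hXk ⟨hX.1, h⟩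
  obtain ⟨N, hN⟩ := exists_forall_notMem_approxSet hfin i₀
  exact ⟨N, i₀, hi₀, hN⟩

theorem multA_diff_inter_null_general (n m : ℕ) (hm : 1 ≤ m)
    (Ψ : (Fin n → ℤ) → ℝ) :
    volume (multSetA n m Ψ \ ⋂ k : ℕ+, multSetA n m (fun q => Ψ q / (k : ℝ))) = 0 := by
  have : Nonempty (Fin m) := ⟨⟨0, hm⟩⟩
  refine measure_mono_null (t := integralHyperplanes _ _ ∪
    ⋃ (k : ℕ+) (N : ℤ) (i₀ : Fin n), badSet Ψ k N i₀) ?_ ?_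
  · rintro X ⟨hX, hXk⟩
    by_cases hXH : X ∈ integralHyperplanes _ _
    · exact Or.inl hXH
    obtain ⟨k, hk⟩ := not_forall.mp (Set.mem_iInter.not.mp hXk)
    obtain ⟨N, i₀, hbad⟩ := exists_mem_badSet hX hk hXH
    exact Or.inr (by simp only [Set.mem_iUnion]; exact ⟨k, N, i₀, hbad⟩)
  · refine measure_union_null volume_integralHyperplanes (measure_iUnion_null fun k ↦
      measure_iUnion_null fun N ↦ measure_iUnion_null fun i₀ ↦ ?_)
    exact volume_badSet Ψ (by positivity) N i₀

theorem multA_diff_inter_null (n m : ℕ) (hn : 1 ≤ n) (hm : 1 ≤ m)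
    (Ψ : (Fin n → ℤ) → ℝ) (hΨ : ∀ q, q ≠ 0 → 0 ≤ Ψ q) :
    volume (multSetA n m Ψ \ ⋂ k : ℕ+, multSetA n m (fun q => Ψ q / (k : ℝ))) = 0 :=
  multA_diff_inter_null_general n m hm Ψ
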